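/- arXiv:2305.15531 — 5 statements merged into one kernel-verified Lean document; each statement's English description precedes it below -/
import Mathlib

section
/- For all vectors v₁, v₂, v₃, v₄, v₅, v₆ ∈ ℝ³, the compound determinant X := det(v₁×v₂, v₃×v₄, v₅×v₆) satisfies X = Δ₁₃₄·Δ₂₅₆ − Δ₁₅₆·Δ₂₃₄, and moreover X = Δ₁₂₄·Δ₃₅₆ − Δ₁₂₃·Δ₄₅₆ and X = Δ₁₂₅·Δ₃₄₆ − Δ₁₂₆·Δ₃₄₅. (These are Scott's three quadratic-difference expressions for the Gr(3,6) cluster variable X.) -/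
/-- Determinant of the 3×3 real matrix with columns `a`, `b`, `c`. -/
noncomputable def det3 (a b c : Fin 3 → ℝ) : ℝ :=
  (Matrix.of ![a, b, c]).transpose.det

/-- The standard cross product on `ℝ³`. -/
def cross (a b : Fin 3 → ℝ) : Fin 3 → ℝ := crossProduct a b

/-- Scott's three quadratic-difference expressions for the Gr(3,6) cluster variable
`X = det(v₁×v₂, v₃×v₄, v₅×v₆)`. -/
theorem scott_X_quadratic_differences (v₁ v₂ v₃ v₄ v₅ v₆ : Fin 3 → ℝ) :
    det3 (cross v₁ v₂) (cross v₃ v₄) (cross v₅ v₆)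
      = det3 v₁ v₃ v₄ * det3 v₂ v₅ v₆ - det3 v₁ v₅ v₆ * det3 v₂ v₃ v₄ ∧
    det3 (cross v₁ v₂) (cross v₃ v₄) (cross v₅ v₆)
      = det3 v₁ v₂ v₄ * det3 v₃ v₅ v₆ - det3 v₁ v₂ v₃ * det3 v₄ v₅ v₆ ∧
    det3 (cross v₁ v₂) (cross v₃ v₄) (cross v₅ v₆)
      = det3 v₁ v₂ v₅ * det3 v₃ v₄ v₆ - det3 v₁ v₂ v₆ * det3 v₃ v₄ v₅ := by
  simp only [det3, cross, crossProduct, Matrix.det_fin_three, Matrix.transpose_apply,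
    Matrix.of_apply, Matrix.cons_val', Matrix.cons_val_zero, Matrix.cons_val_one,
    Matrix.head_cons, Matrix.empty_val', Matrix.cons_val_fin_one, Matrix.head_fin_const,
    Matrix.cons_val_two, Matrix.tail_cons, LinearMap.mk₂_apply]
  refine ⟨by ring, by ring, by ring⟩
end

section
/- For all vectors v₁, v₂, v₃, v₄, v₅, v₆ ∈ ℝ³, the compound determinant Y := det(v₆×v₁, v₂×v₃, v₄×v₅) satisfies Y = Δ₁₄₅·Δ₂₃₆ − Δ₁₂₃·Δ₄₅₆, and moreover Y = Δ₁₄₆·Δ₂₃₅ − Δ₁₅₆·Δ₂₃₄ and Y = Δ₁₃₆·Δ₂₄₅ − Δ₁₂₆·Δ₃₄₅. (These are Scott's three quadratic-difference expressions for the Gr(3,6) cluster variable Y.) -/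
theorem det3_eq_dotProduct_cross (a b c : Fin 3 → ℝ) : det3 a b c = a ⬝ᵥ cross b c := by
  rw [det3, Matrix.det_transpose, cross, triple_product_eq_det]
  rfl

theorem det3_rotate (a b c : Fin 3 → ℝ) : det3 a b c = det3 b c a := by
  simp only [det3_eq_dotProduct_cross, cross, triple_product_permutation a b c]

theorem det3_swap (a b c : Fin 3 → ℝ) : det3 a c b = -det3 a b c := by
  simp only [det3_eq_dotProduct_cross, cross, ← cross_anticomm b c, dotProduct_neg]

theorem dotProduct_cross_eq_det3 (p q x : Fin 3 → ℝ) : x ⬝ᵥ cross p q = det3 p q x := by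
  rw [det3_rotate, det3_rotate, det3_eq_dotProduct_cross]

theorem det3_cross_cross_cross (p q a b c d : Fin 3 → ℝ) :
    det3 (cross p q) (cross a b) (cross c d)
      = det3 a c d * det3 p q b - det3 b c d * det3 p q a := by
  have quadruple : cross (cross a b) (cross c d) = det3 a c d • b - det3 b c d • a := by
    simp only [cross, cross_cross_eq_smul_sub_smul, det3_eq_dotProduct_cross]
  rw [det3_eq_dotProduct_cross, quadruple, dotProduct_sub, dotProduct_smul, dotProduct_smul,
    dotProduct_comm _ b, dotProduct_comm _ a, dotProduct_cross_eq_det3, dotProduct_cross_eq_det3,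
    smul_eq_mul, smul_eq_mul]

/-- Scott's three quadratic-difference expressions for the Gr(3,6) cluster variable
`Y = det(v₆×v₁, v₂×v₃, v₄×v₅)`. -/
theorem scott_Y_quadratic_differences (v₁ v₂ v₃ v₄ v₅ v₆ : Fin 3 → ℝ) :
    det3 (cross v₆ v₁) (cross v₂ v₃) (cross v₄ v₅)
      = det3 v₁ v₄ v₅ * det3 v₂ v₃ v₆ - det3 v₁ v₂ v₃ * det3 v₄ v₅ v₆ ∧
    det3 (cross v₆ v₁) (cross v₂ v₃) (cross v₄ v₅)
      = det3 v₁ v₄ v₆ * det3 v₂ v₃ v₅ - det3 v₁ v₅ v₆ * det3 v₂ v₃ v₄ ∧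
    det3 (cross v₆ v₁) (cross v₂ v₃) (cross v₄ v₅)
      = det3 v₁ v₃ v₆ * det3 v₂ v₄ v₅ - det3 v₁ v₂ v₆ * det3 v₃ v₄ v₅ := by
  refine ⟨?_, ?_, ?_⟩
  · rw [det3_rotate (cross v₆ v₁), det3_rotate (cross v₂ v₃), det3_cross_cross_cross,
      det3_rotate v₆, ← det3_rotate v₁]
    ring
  · rw [← neg_neg (det3 (cross v₆ v₁) _ _), ← det3_swap, det3_cross_cross_cross,
      det3_rotate v₄, det3_rotate v₅, det3_rotate v₆ v₁ v₄, det3_rotate v₆ v₁ v₅]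
    ring
  · rw [det3_cross_cross_cross, det3_rotate v₆ v₁ v₂, det3_rotate v₆ v₁ v₃]
    ring
end

section
/- For all vectors a, b, c, x, y ∈ ℝ³, det(a×b, b×c, x×y) = det(a,b,c)·det(b,x,y). (This computes the right twist of a Plücker coordinate Δ_{a,a+1,b} of a 3×n matrix, with a, a+1 cyclically adjacent indices, as a frozen Plücker coordinate times another Plücker coordinate.) -/
/-! Writing `det(u,v,w) = u ⬝ (v × w)`, the vector quadruple product
`(b×c)×(x×y) = det(b,x,y) c - det(c,x,y) b` turns the left-hand side into
`det(b,x,y) · (a×b)⬝c - det(c,x,y) · (a×b)⬝b`, and the second term vanishes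
because `a×b ⟂ b`. -/

open Matrix

theorem cross_dot_cross_cross_cross {R : Type*} [CommRing R] (a b c x y : Fin 3 → R) :
    a ⨯₃ b ⬝ᵥ b ⨯₃ c ⨯₃ (x ⨯₃ y) = (a ⬝ᵥ b ⨯₃ c) * (b ⬝ᵥ x ⨯₃ y) := by
  have hc : a ⨯₃ b ⬝ᵥ c = a ⬝ᵥ b ⨯₃ c := by
    rw [dotProduct_comm, triple_product_permutation]
  have hb : a ⨯₃ b ⬝ᵥ b = 0 := by
    rw [dotProduct_comm, dot_cross_self]
  rw [cross_cross_eq_smul_sub_smul, dotProduct_sub, dotProduct_smul, dotProduct_smul, hc, hb,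
    smul_eq_mul, smul_zero, sub_zero, mul_comm]

theorem det3_eq_dot_cross (u v w : Fin 3 → ℝ) : det3 u v w = u ⬝ᵥ cross v w := by
  rw [det3, det_transpose, cross, triple_product_eq_det]
  rfl

/-- Right twist of a Plücker coordinate with two cyclically adjacent indices:
`det(a×b, b×c, x×y) = det(a,b,c)·det(b,x,y)`. -/
theorem twist_adjacent_plucker (a b c x y : Fin 3 → ℝ) :
    det3 (cross a b) (cross b c) (cross x y) = det3 a b c * det3 b x y := by
  simp only [det3_eq_dot_cross, cross]
  exact cross_dot_cross_cross_cross a b c x y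
end

section
/- (Twist of the Gr(3,8) cluster variable A.) For all vectors v₁,…,v₈ ∈ ℝ³, set w_i := v_{i+1}×v_{i+2} with indices taken modulo 8 in {1,…,8}, and write Δ_{abc} := det(v_a,v_b,v_c) and T_{abc} := det(w_a,w_b,w_c). Then T_{134}·T_{258}·T_{167} − T_{134}·T_{125}·T_{678} − T_{158}·T_{234}·T_{167} = Δ₁₂₃·Δ₂₃₄·Δ₄₅₆·Δ₁₇₈·(Δ₂₆₇·Δ₃₅₈ − Δ₂₃₅·Δ₆₇₈). That is, T*(A) = Δ₁₂₃Δ₂₃₄Δ₄₅₆Δ₁₇₈·Y^{235678}. -/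
lemma det3_eq (a b c : Fin 3 → ℝ) : det3 a b c =
    a 0 * b 1 * c 2 - a 0 * b 2 * c 1 - a 1 * b 0 * c 2
    + a 1 * b 2 * c 0 + a 2 * b 0 * c 1 - a 2 * b 1 * c 0 := by
  simp only [det3, Matrix.det_fin_three, Matrix.transpose_apply, Matrix.of_apply,
    Matrix.cons_val_zero, Matrix.cons_val_one, Matrix.cons_val_two, Matrix.head_cons,
    Matrix.tail_cons]
  ring

lemma cross_eq (a b : Fin 3 → ℝ) : cross a b =
    ![a 1 * b 2 - a 2 * b 1, a 2 * b 0 - a 0 * b 2, a 0 * b 1 - a 1 * b 0] := by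
  simp [cross, crossProduct]

/-- `det(a×b, c×d, e×f) = det(c,e,f)det(a,b,d) − det(d,e,f)det(a,b,c)`. -/
lemma triple (a b c d e f : Fin 3 → ℝ) :
    det3 (cross a b) (cross c d) (cross e f)
      = det3 c e f * det3 a b d - det3 d e f * det3 a b c := by
  simp only [det3_eq, cross_eq]
  simp only [Matrix.cons_val_zero, Matrix.cons_val_one, Matrix.head_cons,
    Matrix.cons_val_two, Matrix.tail_cons]
  ring

lemma det3_self₁ (a b : Fin 3 → ℝ) : det3 a a b = 0 := by
  simp only [det3_eq]; ring

lemma det3_self₂ (a b : Fin 3 → ℝ) : det3 a b b = 0 := by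
  simp only [det3_eq]; ring

lemma det3_cyc (a b c : Fin 3 → ℝ) : det3 a b c = det3 c a b := by
  simp only [det3_eq]; ring

/-- The residual_plk Plücker-type identity of degree 12. -/
lemma residual_plk (v₁ v₂ v₃ v₄ v₅ v₆ v₇ v₈ : Fin 3 → ℝ) :
    det3 v₂ v₃ v₅ * det3 v₂ v₃ v₈
        * (det3 v₆ v₁ v₂ * det3 v₃ v₄ v₇ - det3 v₇ v₁ v₂ * det3 v₃ v₄ v₆)
      - det3 v₂ v₃ v₅ * (det3 v₃ v₆ v₇ * det3 v₂ v₃ v₄) * det3 v₈ v₁ v₂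
      - det3 v₂ v₃ v₈ * det3 v₃ v₄ v₅
        * (det3 v₆ v₁ v₂ * det3 v₂ v₃ v₇ - det3 v₇ v₁ v₂ * det3 v₂ v₃ v₆)
    = det3 v₁ v₂ v₃ * det3 v₂ v₃ v₄
        * (det3 v₂ v₆ v₇ * det3 v₃ v₅ v₈ - det3 v₂ v₃ v₅ * det3 v₆ v₇ v₈) := by
  simp only [det3_eq]
  ring

/-- Twist of the Gr(3,8) cluster variable `A`:
`T*(A) = Δ₁₂₃Δ₂₃₄Δ₄₅₆Δ₁₇₈ · Y^{235678}`. -/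
theorem twist_of_A (v₁ v₂ v₃ v₄ v₅ v₆ v₇ v₈ w₁ w₂ w₃ w₄ w₅ w₆ w₇ w₈ : Fin 3 → ℝ)
    (hw₁ : w₁ = cross v₂ v₃) (hw₂ : w₂ = cross v₃ v₄) (hw₃ : w₃ = cross v₄ v₅)
    (hw₄ : w₄ = cross v₅ v₆) (hw₅ : w₅ = cross v₆ v₇) (hw₆ : w₆ = cross v₇ v₈)
    (hw₇ : w₇ = cross v₈ v₁) (hw₈ : w₈ = cross v₁ v₂) :
    det3 w₁ w₃ w₄ * det3 w₂ w₅ w₈ * det3 w₁ w₆ w₇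
      - det3 w₁ w₃ w₄ * det3 w₁ w₂ w₅ * det3 w₆ w₇ w₈
      - det3 w₁ w₅ w₈ * det3 w₂ w₃ w₄ * det3 w₁ w₆ w₇
    = det3 v₁ v₂ v₃ * det3 v₂ v₃ v₄ * det3 v₄ v₅ v₆ * det3 v₁ v₇ v₈
        * (det3 v₂ v₆ v₇ * det3 v₃ v₅ v₈ - det3 v₂ v₃ v₅ * det3 v₆ v₇ v₈) := by
  subst hw₁ hw₂ hw₃ hw₄ hw₅ hw₆ hw₇ hw₈
  rw [triple v₂ v₃ v₄ v₅ v₅ v₆, triple v₃ v₄ v₆ v₇ v₁ v₂, triple v₂ v₃ v₇ v₈ v₈ v₁,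
    triple v₂ v₃ v₃ v₄ v₆ v₇, triple v₇ v₈ v₈ v₁ v₁ v₂, triple v₂ v₃ v₆ v₇ v₁ v₂,
    triple v₃ v₄ v₄ v₅ v₅ v₆]
  rw [det3_self₁ v₅ v₆, det3_self₁ v₈ v₁, det3_self₂ v₂ v₃, det3_self₁ v₁ v₂,
    det3_self₂ v₇ v₈, det3_self₂ v₃ v₄]
  rw [show det3 v₇ v₈ v₁ = det3 v₁ v₇ v₈ from det3_cyc v₇ v₈ v₁]
  linear_combination (det3 v₄ v₅ v₆ * det3 v₁ v₇ v₈) * residual_plk v₁ v₂ v₃ v₄ v₅ v₆ v₇ v₈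
end

section
/- (Twist of the rotated cluster variable σ⁷(B) in Gr(3,8), used in Section 8.2.) For all vectors v₁,…,v₈ ∈ ℝ³, set w_i := v_{i+1}×v_{i+2} with indices taken modulo 8 in {1,…,8}, and write Δ_{abc} := det(v_a,v_b,v_c) and T_{abc} := det(w_a,w_b,w_c). Then T_{147}·T_{156}·T_{238} − T_{123}·T_{178}·T_{456} − T_{123}·T_{147}·T_{568} = Δ₁₂₃·Δ₃₄₅·Δ₆₇₈·(Δ₂₅₆·Δ₂₄₇·Δ₁₃₈ − Δ₂₅₆·Δ₃₄₇·Δ₁₂₈ − Δ₂₃₇·Δ₄₅₆·Δ₁₂₈). -/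
lemma det3_expand (a b c : Fin 3 → ℝ) : det3 a b c =
    a 0 * (b 1 * c 2 - b 2 * c 1) - a 1 * (b 0 * c 2 - b 2 * c 0)
      + a 2 * (b 0 * c 1 - b 1 * c 0) := by
  rw [det3, Matrix.det_fin_three]
  simp only [Matrix.transpose_apply, Matrix.of_apply, Matrix.cons_val_zero, Matrix.cons_val_one,
    Matrix.head_cons, Matrix.cons_val_two, Matrix.tail_cons, Matrix.head_fin_const]
  ring

lemma cross0 (a b : Fin 3 → ℝ) : cross a b 0 = a 1 * b 2 - a 2 * b 1 := by
  simp [cross, crossProduct]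

lemma cross1 (a b : Fin 3 → ℝ) : cross a b 1 = a 2 * b 0 - a 0 * b 2 := by
  simp [cross, crossProduct]

lemma cross2 (a b : Fin 3 → ℝ) : cross a b 2 = a 0 * b 1 - a 1 * b 0 := by
  simp [cross, crossProduct]

/-- Twist of the rotated Gr(3,8) cluster variable `σ⁷(B)`. -/
theorem twist_of_sigma7_B (v₁ v₂ v₃ v₄ v₅ v₆ v₇ v₈ w₁ w₂ w₃ w₄ w₅ w₆ w₇ w₈ : Fin 3 → ℝ)
    (hw₁ : w₁ = cross v₂ v₃) (hw₂ : w₂ = cross v₃ v₄) (hw₃ : w₃ = cross v₄ v₅)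
    (hw₄ : w₄ = cross v₅ v₆) (hw₅ : w₅ = cross v₆ v₇) (hw₆ : w₆ = cross v₇ v₈)
    (hw₇ : w₇ = cross v₈ v₁) (hw₈ : w₈ = cross v₁ v₂) :
    det3 w₁ w₄ w₇ * det3 w₁ w₅ w₆ * det3 w₂ w₃ w₈
      - det3 w₁ w₂ w₃ * det3 w₁ w₇ w₈ * det3 w₄ w₅ w₆
      - det3 w₁ w₂ w₃ * det3 w₁ w₄ w₇ * det3 w₅ w₆ w₈
    = det3 v₁ v₂ v₃ * det3 v₃ v₄ v₅ * det3 v₆ v₇ v₈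
        * (det3 v₂ v₅ v₆ * det3 v₂ v₄ v₇ * det3 v₁ v₃ v₈
            - det3 v₂ v₅ v₆ * det3 v₃ v₄ v₇ * det3 v₁ v₂ v₈
            - det3 v₂ v₃ v₇ * det3 v₄ v₅ v₆ * det3 v₁ v₂ v₈) := by
  subst hw₁ hw₂ hw₃ hw₄ hw₅ hw₆ hw₇ hw₈
  have hT147 : det3 (cross v₂ v₃) (cross v₅ v₆) (cross v₈ v₁)
      = det3 v₁ v₅ v₆ * det3 v₂ v₃ v₈ - det3 v₅ v₆ v₈ * det3 v₁ v₂ v₃ := by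
    simp only [det3_expand, cross0, cross1, cross2]; ring
  have hT156 : det3 (cross v₂ v₃) (cross v₆ v₇) (cross v₇ v₈)
      = det3 v₂ v₃ v₇ * det3 v₆ v₇ v₈ := by
    simp only [det3_expand, cross0, cross1, cross2]; ring
  have hT238 : det3 (cross v₃ v₄) (cross v₄ v₅) (cross v₁ v₂)
      = det3 v₂ v₄ v₅ * det3 v₁ v₃ v₄ - det3 v₁ v₄ v₅ * det3 v₂ v₃ v₄ := by
    simp only [det3_expand, cross0, cross1, cross2]; ring
  have hT123 : det3 (cross v₂ v₃) (cross v₃ v₄) (cross v₄ v₅)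
      = det3 v₂ v₃ v₄ * det3 v₃ v₄ v₅ := by
    simp only [det3_expand, cross0, cross1, cross2]; ring
  have hT178 : det3 (cross v₂ v₃) (cross v₈ v₁) (cross v₁ v₂)
      = det3 v₁ v₂ v₈ * det3 v₁ v₂ v₃ := by
    simp only [det3_expand, cross0, cross1, cross2]; ring
  have hT456 : det3 (cross v₅ v₆) (cross v₆ v₇) (cross v₇ v₈)
      = det3 v₅ v₆ v₇ * det3 v₆ v₇ v₈ := by
    simp only [det3_expand, cross0, cross1, cross2]; ring
  have hT568 : det3 (cross v₆ v₇) (cross v₇ v₈) (cross v₁ v₂)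
      = det3 v₂ v₇ v₈ * det3 v₁ v₆ v₇ - det3 v₁ v₇ v₈ * det3 v₂ v₆ v₇ := by
    simp only [det3_expand, cross0, cross1, cross2]; ring
  rw [hT147, hT156, hT238, hT123, hT178, hT456, hT568]
  have hf2 : det3 v₂ v₄ v₅ * det3 v₁ v₃ v₄ - det3 v₁ v₄ v₅ * det3 v₂ v₃ v₄
      = det3 v₁ v₂ v₄ * det3 v₃ v₄ v₅ := by
    simp only [det3_expand]; ring
  have hf3 : det3 v₂ v₇ v₈ * det3 v₁ v₆ v₇ - det3 v₁ v₇ v₈ * det3 v₂ v₆ v₇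
      = det3 v₁ v₂ v₇ * det3 v₆ v₇ v₈ := by
    simp only [det3_expand]; ring
  have hpr : det3 v₁ v₂ v₄ * det3 v₂ v₃ v₇ - det3 v₁ v₂ v₇ * det3 v₂ v₃ v₄
      = det3 v₁ v₂ v₃ * det3 v₂ v₄ v₇ := by
    simp only [det3_expand]; ring
  have hG : det3 v₂ v₄ v₇ * (det3 v₁ v₅ v₆ * det3 v₂ v₃ v₈ - det3 v₅ v₆ v₈ * det3 v₁ v₂ v₃)
        - det3 v₂ v₃ v₄ * det3 v₁ v₂ v₈ * det3 v₅ v₆ v₇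
        - det3 v₂ v₅ v₆ * det3 v₂ v₄ v₇ * det3 v₁ v₃ v₈
        + det3 v₂ v₅ v₆ * det3 v₃ v₄ v₇ * det3 v₁ v₂ v₈
        + det3 v₂ v₃ v₇ * det3 v₄ v₅ v₆ * det3 v₁ v₂ v₈ = 0 := by
    simp only [det3_expand]; ring
  linear_combination
    det3 v₂ v₃ v₇ * det3 v₆ v₇ v₈
        * (det3 v₁ v₅ v₆ * det3 v₂ v₃ v₈ - det3 v₅ v₆ v₈ * det3 v₁ v₂ v₃) * hf2
      - det3 v₂ v₃ v₄ * det3 v₃ v₄ v₅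
        * (det3 v₁ v₅ v₆ * det3 v₂ v₃ v₈ - det3 v₅ v₆ v₈ * det3 v₁ v₂ v₃) * hf3
      + det3 v₃ v₄ v₅ * det3 v₆ v₇ v₈
        * (det3 v₁ v₅ v₆ * det3 v₂ v₃ v₈ - det3 v₅ v₆ v₈ * det3 v₁ v₂ v₃) * hpr
      + det3 v₁ v₂ v₃ * det3 v₃ v₄ v₅ * det3 v₆ v₇ v₈ * hG
end
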